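/- The MidOrNearest mechanism 2-approximates the optimal maximum distance: for all agent locations x_1 ≤ … ≤ x_n in [0,1], the maximum distance max_i |x_i - y| with y = median(x_1, 1/2, x_n) is at most 2 times the optimal maximum distance (x_n - x_1)/2. -/
import Mathlib

/-- Maximum distance of facility location `y` from agents `x`. -/
noncomputable def maxDist {n : ℕ} (x : Fin (n + 1) → ℝ) (y : ℝ) : ℝ :=
  Finset.univ.sup' Finset.univ_nonempty (fun i => |x i - y|)

/-- The MidOrNearest location: median(x1, 1/2, xn) for x1 ≤ xn. -/
noncomputable def midOrNearest (x1 xn : ℝ) : ℝ := max x1 (min (1 / 2) xn)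

/-- MidOrNearest 2-approximates the optimal maximum distance (xₙ - x₁)/2. -/
theorem stmt_3 (n : ℕ) (x : Fin (n + 1) → ℝ) (hmono : Monotone x)
    (hx : ∀ i, x i ∈ Set.Icc (0 : ℝ) 1) :
    maxDist x (midOrNearest (x 0) (x (Fin.last n))) ≤
      2 * ((x (Fin.last n) - x 0) / 2) := by
  have h01 : x 0 ≤ x (Fin.last n) := hmono (Fin.zero_le _)
  set y := midOrNearest (x 0) (x (Fin.last n)) with hy
  have hy1 : x 0 ≤ y := le_max_left _ _
  have hy2 : y ≤ x (Fin.last n) := max_le h01 (min_le_right _ _)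
  rw [show 2 * ((x (Fin.last n) - x 0) / 2) = x (Fin.last n) - x 0 by ring]
  apply Finset.sup'_le
  intro i _
  have h1 : x 0 ≤ x i := hmono (Fin.zero_le _)
  have h2 : x i ≤ x (Fin.last n) := hmono (Fin.le_last _)
  rw [abs_le]
  constructor <;> linarith
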